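/- arXiv:2504.10966 — 4 statements merged into one kernel-verified Lean document; each statement's English description precedes it below -/
import Mathlib

section
/- Let f : [0,∞) → ℝ be C¹ with f(s) > 0 for all s > 0, and suppose F(s) := ∫_s^∞ dτ/f(τ) is finite for every s > 0. If there exists s₁ > 0 such that f'(s)·F(s) ≤ 1 for all s ≥ s₁, then there exists a constant C > 0 such that f(F⁻¹(t)) ≤ C·t⁻¹ for all t ∈ (0, F(s₁)). -/
/-!
Since `F' = -1/f`, the product `f·F` has derivative `f'F - 1`, which is `≤ 0` on
`[s₁, ∞)`. So `f·F` decreases there, and at `s = F⁻¹ t > s₁` this reads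
`f (F⁻¹ t) · t ≤ f s₁ · F s₁`.
-/

open Set MeasureTheory Filter Topology

theorem hasDerivAt_integral_Ioi {E : Type*} [NormedAddCommGroup E] [NormedSpace ℝ E]
    [CompleteSpace E] {g : ℝ → E} {b s : ℝ} (hbs : b < s) (hg : IntegrableOn g (Ioi b))
    (hgs : ContinuousAt g s) :
    HasDerivAt (fun u => ∫ τ in Ioi u, g τ) (-g s) s := by
  have hmeas : StronglyMeasurableAtFilter g (𝓝 s) :=
    ⟨Ioi b, Ioi_mem_nhds hbs, hg.aestronglyMeasurable⟩
  have hbs_int : IntervalIntegrable g volume b s :=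
    (intervalIntegrable_iff_integrableOn_Ioc_of_le hbs.le).2 (hg.mono_set Ioc_subset_Ioi_self)
  refine ((intervalIntegral.integral_hasDerivAt_right hbs_int hmeas hgs).const_sub
    (∫ τ in Ioi b, g τ)).congr_of_eventuallyEq ?_
  filter_upwards [Ioi_mem_nhds hbs] with u hu
  rw [← intervalIntegral.integral_Ioi_sub_Ioi hg hu.le, sub_sub_cancel]

theorem antitoneOn_mul_of_deriv_mul_le_one {f f' F : ℝ → ℝ} {a : ℝ}
    (hf : ∀ s ≥ a, HasDerivAt f (f' s) s) (hF : ∀ s ≥ a, HasDerivAt F (-(f s)⁻¹) s)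
    (hf0 : ∀ s ≥ a, f s ≠ 0) (hfF : ∀ s ≥ a, f' s * F s ≤ 1) :
    AntitoneOn (fun s => f s * F s) (Ici a) := by
  have hprod : ∀ s ≥ a, HasDerivAt (fun u => f u * F u) (f' s * F s - 1) s := fun s hs => by
    have h := (hf s hs).mul (hF s hs)
    rwa [mul_neg, mul_inv_cancel₀ (hf0 s hs), ← sub_eq_add_neg] at h
  refine antitoneOn_of_hasDerivWithinAt_nonpos (f' := fun s => f' s * F s - 1)
    (convex_Ici a) (fun s hs => (hprod s hs).continuousAt.continuousWithinAt)
    (fun s hs => ?_) (fun s hs => ?_)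
  all_goals rw [interior_Ici] at hs
  · exact (hprod s hs.le).hasDerivWithinAt
  · exact sub_nonpos.2 (hfF s hs.le)

theorem stmt0_general
    (f : ℝ → ℝ) (hf : ContDiffOn ℝ 1 f (Ici 0))
    (hfpos : ∀ s > (0:ℝ), 0 < f s)
    (hint : ∀ s > (0:ℝ), IntegrableOn (fun τ => 1 / f τ) (Ioi s))
    (F : ℝ → ℝ) (hF : ∀ s > (0:ℝ), F s = ∫ τ in Ioi s, 1 / f τ)
    (Finv : ℝ → ℝ)
    (s₁ : ℝ) (hs₁ : 0 < s₁)
    (hFinv_right : ∀ t ∈ Ioo 0 (F s₁), s₁ < Finv t ∧ F (Finv t) = t)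
    (hfF : ∀ s ≥ s₁, deriv f s * F s ≤ 1) :
    ∃ C > (0:ℝ), ∀ t ∈ Ioo 0 (F s₁), f (Finv t) ≤ C / t := by
  have hfd : ∀ s > 0, HasDerivAt f (deriv f s) s := fun s hs =>
    ((hf.contDiffAt (Ici_mem_nhds hs)).differentiableAt one_ne_zero).hasDerivAt
  have hFd : ∀ s > 0, HasDerivAt F (-(f s)⁻¹) s := fun s hs => by
    have hcont : ContinuousAt (fun τ => 1 / f τ) s :=
      continuousAt_const.div (hfd s hs).continuousAt (hfpos s hs).ne'
    rw [← one_div]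
    refine (hasDerivAt_integral_Ioi (half_lt_self hs) (hint _ (half_pos hs)) hcont)
      |>.congr_of_eventuallyEq ?_
    filter_upwards [Ioi_mem_nhds hs] with u hu using hF u hu
  have hanti := antitoneOn_mul_of_deriv_mul_le_one (a := s₁)
    (fun s hs => hfd s (hs₁.trans_le hs)) (fun s hs => hFd s (hs₁.trans_le hs))
    (fun s hs => (hfpos s (hs₁.trans_le hs)).ne') hfF
  refine ⟨max (f s₁ * F s₁) 1, by positivity, fun t ht => ?_⟩
  obtain ⟨hst, hFt⟩ := hFinv_right t ht
  rw [le_div_iff₀ ht.1]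
  calc f (Finv t) * t = f (Finv t) * F (Finv t) := by rw [hFt]
    _ ≤ f s₁ * F s₁ := hanti self_mem_Ici hst.le hst.le
    _ ≤ max (f s₁ * F s₁) 1 := le_max_left _ _

/-- If `f` is `C¹` on `[0,∞)`, positive on `(0,∞)`, with
`F s = ∫_s^∞ dτ / f τ` finite, and `f'(s) F(s) ≤ 1` for `s ≥ s₁`, then
`f (F⁻¹ t) ≤ C / t` on `(0, F s₁)`. -/
theorem stmt0
    (f : ℝ → ℝ) (hf : ContDiffOn ℝ 1 f (Ici 0))
    (hfpos : ∀ s > (0:ℝ), 0 < f s)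
    (hint : ∀ s > (0:ℝ), IntegrableOn (fun τ => 1 / f τ) (Ioi s))
    (F : ℝ → ℝ) (hF : ∀ s > (0:ℝ), F s = ∫ τ in Ioi s, 1 / f τ)
    (Finv : ℝ → ℝ)
    (hFinv_left : ∀ s > (0:ℝ), Finv (F s) = s)
    (s₁ : ℝ) (hs₁ : 0 < s₁)
    (hFinv_right : ∀ t ∈ Ioo 0 (F s₁), s₁ < Finv t ∧ F (Finv t) = t)
    (hfF : ∀ s ≥ s₁, deriv f s * F s ≤ 1) :
    ∃ C > (0:ℝ), ∀ t ∈ Ioo 0 (F s₁), f (Finv t) ≤ C / t :=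
  stmt0_general f hf hfpos hint F hF Finv s₁ hs₁ hFinv_right hfF
end

section
/- For q > 1, let q' = q/(q−1). The radial function v(x) = (−2 log|x|)^{1/q} satisfies −Δv = (4/(q q')) · v^{1−2q} · e^{v^q} pointwise on the punctured disc {x ∈ ℝ² : 0 < |x| < 1}. -/
/-!
Write `L r = -2 log r`, so `φ = L ^ (1/q)`. Since `L' = -2/r`, the radial Laplacian of a power
`L ^ p` is `4 p (p - 1) L ^ (p - 2) / r ^ 2`. For `p = 1/q` we have `4 p (1 - p) = 4/(q q')`,
`φ ^ (1 - 2q) = L ^ (1/q - 2)` and `exp (φ ^ q) = exp L = r ^ (-2)`.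
-/

open Set Real

lemma neg_two_mul_log_pos {r : ℝ} (hr : r ∈ Ioo (0:ℝ) 1) : 0 < -2 * log r := by
  linarith [log_neg hr.1 hr.2]

lemma hasDerivAt_rpow_neg_two_mul_log (p : ℝ) {r : ℝ} (hr : r ∈ Ioo (0:ℝ) 1) :
    HasDerivAt (fun t => (-2 * log t) ^ p) (p * (-2 * log r) ^ (p - 1) * (-2 / r)) r := by
  have hlog : HasDerivAt (fun t => -2 * log t) (-2 / r) r := by
    simpa [div_eq_mul_inv] using (hasDerivAt_log hr.1.ne').const_mul (-2 : ℝ)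
  exact (hasDerivAt_rpow_const (Or.inl (neg_two_mul_log_pos hr).ne')).comp r hlog

lemma exp_rpow_rpow_inv_neg_two_mul_log {q r : ℝ} (hq : q ≠ 0) (hr : r ∈ Ioo (0:ℝ) 1) :
    exp (((-2 * log r) ^ (1 / q)) ^ q) = (r ^ 2)⁻¹ := by
  rw [← rpow_mul (neg_two_mul_log_pos hr).le, one_div_mul_cancel hq, rpow_one,
    ← rpow_natCast, rpow_def_of_pos hr.1, ← exp_neg]
  ring_nf

lemma deriv_eqOn_rpow_neg_two_mul_log {p : ℝ} {φ : ℝ → ℝ}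
    (hφ : EqOn φ (fun t => (-2 * log t) ^ p) (Ioo 0 1)) :
    EqOn (deriv φ) (fun t => p * (-2 * log t) ^ (p - 1) * (-2 / t)) (Ioo 0 1) := fun r hr => by
  rw [(hφ.eventuallyEq_of_mem (isOpen_Ioo.mem_nhds hr)).deriv_eq,
    (hasDerivAt_rpow_neg_two_mul_log p hr).deriv]

lemma hasDerivAt_deriv_rpow_neg_two_mul_log (p : ℝ) {r : ℝ} (hr : r ∈ Ioo (0:ℝ) 1) :
    HasDerivAt (fun t => p * (-2 * log t) ^ (p - 1) * (-2 / t))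
      (p * ((p - 1) * (-2 * log r) ^ (p - 1 - 1) * (-2 / r) * (-2 / r)
        + (-2 * log r) ^ (p - 1) * (2 / r ^ 2))) r := by
  have hinv : HasDerivAt (fun t => -2 / t) (2 / r ^ 2) r := by
    simpa [div_eq_mul_inv] using (hasDerivAt_inv hr.1.ne').const_mul (-2 : ℝ)
  simpa [mul_assoc] using ((hasDerivAt_rpow_neg_two_mul_log (p - 1) hr).mul hinv).const_mul p

theorem radial_laplacian_rpow_neg_two_mul_log {p : ℝ} {φ : ℝ → ℝ}
    (hφ : EqOn φ (fun t => (-2 * log t) ^ p) (Ioo 0 1)) {r : ℝ} (hr : r ∈ Ioo (0:ℝ) 1) :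
    deriv (deriv φ) r + deriv φ r / r = 4 * p * (p - 1) * (-2 * log r) ^ (p - 2) / r ^ 2 := by
  have hd := deriv_eqOn_rpow_neg_two_mul_log hφ
  rw [(hd.eventuallyEq_of_mem (isOpen_Ioo.mem_nhds hr)).deriv_eq,
    (hasDerivAt_deriv_rpow_neg_two_mul_log p hr).deriv, hd hr]
  beta_reduce
  have hL := neg_two_mul_log_pos hr
  have hsucc : (-2 * log r) ^ (p - 1) = (-2 * log r) ^ (p - 2) * (-2 * log r) := by
    rw [← rpow_add_one hL.ne']; ring_nf
  rw [hsucc, show p - 1 - 1 = p - 2 by ring]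
  have hr0 : r ≠ 0 := hr.1.ne'
  field_simp
  ring

/-- For `q > 1` and `q' = q/(q-1)`, the radial profile
`φ r = (-2 log r)^(1/q)` of `v(x) = (-2 log |x|)^(1/q)` satisfies
`-Δ v = (4/(q q')) v^(1-2q) e^(v^q)` on the punctured unit disc, where for a
radial function the Laplacian on `ℝ²` is `Δ v = φ'' (r) + φ'(r)/r`, `r = |x|`. -/
theorem stmt1 (q : ℝ) (hq : 1 < q) (q' : ℝ) (hq' : q' = q / (q - 1))
    (φ : ℝ → ℝ) (hφ : ∀ r ∈ Ioo (0:ℝ) 1, φ r = (-2 * Real.log r) ^ (1/q : ℝ)) :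
    ∀ r ∈ Ioo (0:ℝ) 1,
      -(deriv (deriv φ) r + deriv φ r / r)
        = (4 / (q * q')) * (φ r) ^ ((1 : ℝ) - 2 * q) * Real.exp ((φ r) ^ (q : ℝ)) := by
  intro r hr
  have hq0 : q ≠ 0 := by linarith
  have hq1 : q - 1 ≠ 0 := by linarith
  have hpow : ((-2 * log r) ^ (1 / q)) ^ (1 - 2 * q) = (-2 * log r) ^ (1 / q - 2) := by
    rw [← rpow_mul (neg_two_mul_log_pos hr).le]
    congr 1
    field_simp
  rw [radial_laplacian_rpow_neg_two_mul_log hφ hr, hφ r hr, hpow,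
    exp_rpow_rpow_inv_neg_two_mul_log hq0 hr, hq']
  field_simp
  ring
end

section
/- Let f be C¹ on [0,∞) with f(s) > 0, f'(s) > 0 for s > 0, F(s) = ∫_s^∞ dτ/f(τ) < ∞, and suppose β > 0 satisfies f'(s)F(s) ≤ 1 for all s ≥ β. Then the function φ(t) := F⁻¹(t⁻²) is concave on the interval (F(β)^{−1/2}, ∞). -/
/-!
Since `F' = -1/f < 0`, the inverse `ψ = F⁻¹` is differentiable on `(0, F β)` with `ψ' = -f ∘ ψ`.
For `φ t = ψ (t⁻²)` this gives `φ' t = 2 f(φ t) t⁻³` and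
`φ'' t = 2 f(φ t) t⁻⁴ (2 f'(φ t) t⁻² - 3)`. As `t⁻² = F (φ t)`, the hypothesis `f' F ≤ 1`
makes the last factor negative.
-/

open Set MeasureTheory Filter Topology

theorem StrictAntiOn.continuousAt_of_image_mem_nhds {α β : Type*} [LinearOrder α]
    [TopologicalSpace α] [OrderTopology α] [LinearOrder β] [TopologicalSpace β] [OrderTopology β]
    [DenselyOrdered β] {f : α → β} {s : Set α} {a : α} (h_anti : StrictAntiOn f s)
    (hs : s ∈ 𝓝 a) (hfs : f '' s ∈ 𝓝 (f a)) : ContinuousAt f a :=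
  StrictMonoOn.continuousAt_of_image_mem_nhds (β := βᵒᵈ) h_anti.dual_right hs hfs

theorem Set.LeftInvOn.strictAntiOn {α β : Type*} [Preorder α] [LinearOrder β] {F : β → α}
    {ψ : α → β} {s : Set β} {t : Set α} (hψ : LeftInvOn F ψ t) (hmaps : MapsTo ψ t s)
    (hF : StrictAntiOn F s) : StrictAntiOn ψ t := by
  intro u hu v hv huv
  by_contra! h
  have := hF.antitoneOn (hmaps hu) (hmaps hv) h
  rw [hψ hu, hψ hv] at this
  exact this.not_gt huv

theorem hasDerivAt_integral_Ioi_s7 {g : ℝ → ℝ} {a s : ℝ} (hint : IntegrableOn g (Ioi a))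
    (has : a < s) (hmeas : StronglyMeasurableAtFilter g (𝓝 s)) (hg : ContinuousAt g s) :
    HasDerivAt (fun x => ∫ τ in Ioi x, g τ) (-g s) s := by
  have hii : IntervalIntegrable g volume a s :=
    (intervalIntegrable_iff_integrableOn_Ioc_of_le has.le).2 (hint.mono_set Ioc_subset_Ioi_self)
  have hsplit : ∀ᶠ x in 𝓝 s,
      ∫ τ in Ioi x, g τ = (∫ τ in Ioi a, g τ) - ∫ τ in a..x, g τ := by
    filter_upwards [Ioi_mem_nhds has] with x hx
    rw [← intervalIntegral.integral_Ioi_sub_Ioi hint hx.le, sub_sub_cancel]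
  refine HasDerivAt.congr_of_eventuallyEq ?_ hsplit
  simpa using
    (intervalIntegral.integral_hasDerivAt_right hii hmeas hg).const_sub (∫ τ in Ioi a, g τ)

theorem hasDerivAt_of_eq_integral_Ioi {g F : ℝ → ℝ} {a : ℝ} (hg : ContinuousOn g (Ioi a))
    (hint : ∀ c > a, IntegrableOn g (Ioi c)) (hF : ∀ s > a, F s = ∫ τ in Ioi s, g τ)
    {s : ℝ} (hs : a < s) : HasDerivAt F (-g s) s := by
  obtain ⟨c, hac, hcs⟩ := exists_between hs
  have hFeq : F =ᶠ[𝓝 s] fun x => ∫ τ in Ioi x, g τ :=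
    eventually_of_mem (Ioi_mem_nhds hs) hF
  exact (hasDerivAt_integral_Ioi_s7 (hint c hac) hcs (hg.stronglyMeasurableAtFilter isOpen_Ioi s hs)
    (hg.continuousAt (Ioi_mem_nhds hs))).congr_of_eventuallyEq hFeq

theorem strictAntiOn_of_eq_integral_Ioi {g F : ℝ → ℝ} {a : ℝ} (hg : ContinuousOn g (Ioi a))
    (hint : ∀ c > a, IntegrableOn g (Ioi c)) (hF : ∀ s > a, F s = ∫ τ in Ioi s, g τ)
    (hgpos : ∀ s > a, 0 < g s) : StrictAntiOn F (Ioi a) := by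
  have hFd := fun s (hs : s ∈ Ioi a) => hasDerivAt_of_eq_integral_Ioi hg hint hF hs
  refine strictAntiOn_of_hasDerivWithinAt_neg (f' := -g) (convex_Ioi a)
    (fun s hs => (hFd s hs).continuousAt.continuousWithinAt) ?_ ?_ <;> rw [interior_Ioi]
  · exact fun s hs => (hFd s hs).hasDerivWithinAt
  · exact fun s hs => neg_neg_of_pos (hgpos s hs)

theorem pos_of_eq_integral_Ioi {g F : ℝ → ℝ} {a : ℝ} (hg : ContinuousOn g (Ioi a))
    (hint : ∀ c > a, IntegrableOn g (Ioi c)) (hF : ∀ s > a, F s = ∫ τ in Ioi s, g τ)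
    (hgpos : ∀ s > a, 0 < g s) {s : ℝ} (hs : a < s) : 0 < F s := by
  have hs1 : a < s + 1 := by linarith
  have hnonneg : 0 ≤ F (s + 1) := by
    rw [hF _ hs1]
    exact setIntegral_nonneg measurableSet_Ioi fun τ hτ => (hgpos τ (hs1.trans hτ)).le
  exact hnonneg.trans_lt
    (strictAntiOn_of_eq_integral_Ioi hg hint hF hgpos hs hs1 (lt_add_one s))

theorem hasDerivAt_of_rightInverse_of_strictAntiOn {F F' ψ : ℝ → ℝ} {β : ℝ}
    (hanti : StrictAntiOn F (Ici β)) (hpos : ∀ s > β, 0 < F s)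
    (hderiv : ∀ s > β, HasDerivAt F (F' s) s) (hF' : ∀ s > β, F' s ≠ 0)
    (hleft : ∀ s > β, ψ (F s) = s)
    (hright : ∀ u : ℝ, 0 < u → u ≤ F β → β ≤ ψ u ∧ F (ψ u) = u)
    {u : ℝ} (hu : u ∈ Ioo 0 (F β)) : HasDerivAt ψ (F' (ψ u))⁻¹ u := by
  have hmaps : MapsTo ψ (Ioo 0 (F β)) (Ioi β) := by
    intro v hv
    obtain ⟨hβv, hFv⟩ := hright v hv.1 hv.2.le
    refine lt_of_le_of_ne hβv fun h => ?_
    rw [← h] at hFv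
    exact hv.2.ne hFv.symm
  have hinv : LeftInvOn F ψ (Ioo 0 (F β)) := fun v hv => (hright v hv.1 hv.2.le).2
  have himage : Ioi β ⊆ ψ '' Ioo 0 (F β) := fun s hs =>
    ⟨F s, ⟨hpos s hs, hanti self_mem_Ici (mem_Ici.2 hs.le) hs⟩, hleft s hs⟩
  have hcont : ContinuousAt ψ u :=
    (hinv.strictAntiOn (hmaps.mono_right Ioi_subset_Ici_self) hanti).continuousAt_of_image_mem_nhds
      (Ioo_mem_nhds hu.1 hu.2) (mem_of_superset (Ioi_mem_nhds (hmaps hu)) himage)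
  exact HasDerivAt.of_local_left_inverse hcont (hderiv _ (hmaps hu)) (hF' _ (hmaps hu))
    (eventually_of_mem (Ioo_mem_nhds hu.1 hu.2) hinv)

theorem rpow_neg_two_mem_Ioo {b t : ℝ} (hb : 0 < b) (ht : b ^ (-(1/2) : ℝ) < t) :
    t ^ (-(2:ℝ)) ∈ Ioo 0 b := by
  have hb' : 0 < b ^ (-(1/2) : ℝ) := Real.rpow_pos_of_pos hb _
  refine ⟨Real.rpow_pos_of_pos (hb'.trans ht) _, ?_⟩
  calc t ^ (-(2:ℝ)) < (b ^ (-(1/2) : ℝ)) ^ (-(2:ℝ)) :=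
        Real.rpow_lt_rpow_of_neg hb' ht (by norm_num)
    _ = b := by rw [← Real.rpow_mul hb.le]; norm_num

theorem concaveOn_comp_rpow_neg_two {ψ h : ℝ → ℝ} {b : ℝ} (hb : 0 < b)
    (hψ : ∀ u ∈ Ioo 0 b, HasDerivAt ψ (-h (ψ u)) u)
    (hh : ∀ u ∈ Ioo 0 b, DifferentiableAt ℝ h (ψ u))
    (hh_nonneg : ∀ u ∈ Ioo 0 b, 0 ≤ h (ψ u))
    (hbound : ∀ u ∈ Ioo 0 b, deriv h (ψ u) * u ≤ 3 / 2) :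
    ConcaveOn ℝ (Ioi (b ^ (-(1/2) : ℝ))) (fun t => ψ (t ^ (-(2:ℝ)))) := by
  set φ : ℝ → ℝ := fun t => ψ (t ^ (-(2:ℝ)))
  set φ' : ℝ → ℝ := fun t => 2 * h (φ t) * t ^ (-(3:ℝ))
  have hpos : ∀ t ∈ Ioi (b ^ (-(1/2) : ℝ)), 0 < t := fun t ht =>
    (Real.rpow_pos_of_pos hb _).trans ht
  have hφ : ∀ t ∈ Ioi (b ^ (-(1/2) : ℝ)), HasDerivAt φ (φ' t) t := by
    intro t ht
    have := (hψ _ (rpow_neg_two_mem_Ioo hb ht)).comp t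
      (Real.hasDerivAt_rpow_const (p := -(2:ℝ)) (Or.inl (hpos t ht).ne'))
    exact this.congr_deriv (by simp only [φ', φ]; norm_num; ring)
  set φ'' : ℝ → ℝ := fun t =>
    2 * (deriv h (φ t) * φ' t) * t ^ (-(3:ℝ)) + 2 * h (φ t) * (-3 * t ^ (-(4:ℝ)))
  have hφ' : ∀ t ∈ Ioi (b ^ (-(1/2) : ℝ)), HasDerivAt φ' (φ'' t) t := by
    intro t ht
    have hhφ := (hh _ (rpow_neg_two_mem_Ioo hb ht)).hasDerivAt.comp t (hφ t ht)
    have hpow := Real.hasDerivAt_rpow_const (p := -(3:ℝ)) (Or.inl (hpos t ht).ne')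
    exact ((hhφ.const_mul 2).mul hpow).congr_deriv (by simp only [φ'', φ, Function.comp]; norm_num)
  refine concaveOn_of_hasDerivWithinAt2_nonpos (f' := φ') (f'' := φ'') (convex_Ioi _)
    (fun t ht => (hφ t ht).continuousAt.continuousWithinAt) ?_ ?_ ?_ <;> rw [interior_Ioi]
  · exact fun t ht => (hφ t ht).hasDerivWithinAt
  · exact fun t ht => (hφ' t ht).hasDerivWithinAt
  · intro t ht
    have hu := rpow_neg_two_mem_Ioo hb ht
    have h36 : t ^ (-(3:ℝ)) * t ^ (-(3:ℝ)) = t ^ (-(2:ℝ)) * t ^ (-(4:ℝ)) := by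
      rw [← Real.rpow_add (hpos t ht), ← Real.rpow_add (hpos t ht)]; norm_num
    have : φ'' t = 2 * h (φ t) * t ^ (-(4:ℝ)) * (2 * (deriv h (φ t) * t ^ (-(2:ℝ))) - 3) := by
      simp only [φ'', φ']; linear_combination (4 * deriv h (φ t) * h (φ t)) * h36
    rw [this]
    refine mul_nonpos_of_nonneg_of_nonpos ?_ (by linarith [hbound _ hu])
    have := hh_nonneg _ hu
    have := Real.rpow_pos_of_pos (hpos t ht) (-(4:ℝ))
    positivity

theorem stmt7_general
    (f : ℝ → ℝ) (hf : ContDiffOn ℝ 1 f (Ici 0))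
    (hfpos : ∀ s > (0:ℝ), 0 < f s)
    (hint : ∀ s > (0:ℝ), IntegrableOn (fun τ => 1 / f τ) (Ioi s))
    (F : ℝ → ℝ) (hF : ∀ s > (0:ℝ), F s = ∫ τ in Ioi s, 1 / f τ)
    (β : ℝ) (hβ : 0 < β) (hfF : ∀ s ≥ β, deriv f s * F s ≤ 1)
    (Finv : ℝ → ℝ)
    (hFinv_left : ∀ s > (0:ℝ), Finv (F s) = s)
    (hFinv_right : ∀ u : ℝ, 0 < u → u ≤ F β → β ≤ Finv u ∧ F (Finv u) = u) :
    ConcaveOn ℝ (Ioi ((F β) ^ (-(1/2) : ℝ))) (fun t => Finv (t ^ (-(2:ℝ)))) := by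
  have hg : ContinuousOn (fun τ => 1 / f τ) (Ioi 0) :=
    continuousOn_const.div (hf.continuousOn.mono Ioi_subset_Ici_self) fun s hs => (hfpos s hs).ne'
  have hgpos : ∀ s > (0:ℝ), 0 < 1 / f s := fun s hs => one_div_pos.2 (hfpos s hs)
  have hFinv : ∀ u ∈ Ioo 0 (F β), HasDerivAt Finv (-f (Finv u)) u := fun u hu => by
    simpa using hasDerivAt_of_rightInverse_of_strictAntiOn
      ((strictAntiOn_of_eq_integral_Ioi hg hint hF hgpos).mono (Ici_subset_Ioi.2 hβ))
      (fun s hs => pos_of_eq_integral_Ioi hg hint hF hgpos (hβ.trans hs))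
      (fun s hs => hasDerivAt_of_eq_integral_Ioi hg hint hF (hβ.trans hs))
      (fun s hs => (neg_neg_of_pos (hgpos s (hβ.trans hs))).ne)
      (fun s hs => hFinv_left s (hβ.trans hs)) hFinv_right hu
  have hFinv_ge : ∀ u ∈ Ioo 0 (F β), β ≤ Finv u ∧ F (Finv u) = u := fun u hu =>
    hFinv_right u hu.1 hu.2.le
  refine concaveOn_comp_rpow_neg_two (pos_of_eq_integral_Ioi hg hint hF hgpos hβ) hFinv
    (fun u hu => ?_) (fun u hu => (hfpos _ (hβ.trans_le (hFinv_ge u hu).1)).le) (fun u hu => ?_)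
  · exact (hf.contDiffAt (Ici_mem_nhds (hβ.trans_le (hFinv_ge u hu).1))).differentiableAt
      one_ne_zero
  · have := hfF _ (hFinv_ge u hu).1
    rw [(hFinv_ge u hu).2] at this
    linarith

/-- With `f, F` as before and `β > 0` such that `f'(s) F(s) ≤ 1`
for all `s ≥ β`, the function `φ(t) = F⁻¹(t⁻²)` is concave on `(F(β)^(-1/2), ∞)`. -/
theorem stmt7
    (f : ℝ → ℝ) (hf : ContDiffOn ℝ 1 f (Ici 0))
    (hfpos : ∀ s > (0:ℝ), 0 < f s) (hf'pos : ∀ s > (0:ℝ), 0 < deriv f s)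
    (hint : ∀ s > (0:ℝ), IntegrableOn (fun τ => 1 / f τ) (Ioi s))
    (F : ℝ → ℝ) (hF : ∀ s > (0:ℝ), F s = ∫ τ in Ioi s, 1 / f τ)
    (β : ℝ) (hβ : 0 < β) (hfF : ∀ s ≥ β, deriv f s * F s ≤ 1)
    (Finv : ℝ → ℝ)
    (hFinv_left : ∀ s > (0:ℝ), Finv (F s) = s)
    (hFinv_right : ∀ u : ℝ, 0 < u → u ≤ F β → β ≤ Finv u ∧ F (Finv u) = u) :
    ConcaveOn ℝ (Ioi ((F β) ^ (-(1/2) : ℝ))) (fun t => Finv (t ^ (-(2:ℝ)))) :=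
  stmt7_general f hf hfpos hint F hF β hβ hfF Finv hFinv_left hFinv_right
end

section
/- Let f, F, β be as above with f'(s)F(s) ≤ 1 for s ≥ β and β − 2 f(β) F(β) ≥ 0. Define H : [0,∞) → ℝ by H(t) = F⁻¹(t⁻²) for t > F(β)^{−1/2}, and H(t) = 2 F(β)^{3/2} f(β) (t − F(β)^{−1/2}) + β for 0 ≤ t ≤ F(β)^{−1/2}. Then H is concave, nondecreasing on [0,∞), and H(0) ≥ 0. -/
open Set MeasureTheory Filter Topology

/-!
On `t ≥ t₀ := F(β)^(-1/2)` the curved piece `g(t) = F⁻¹(t⁻²)` is the inverse of the increasing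
map `s ↦ F(s)^(-1/2)` on `[β, ∞)`, whose derivative is `1 / ψ(s)` with `ψ = 2 F^(3/2) f`; hence
`g' = ψ ∘ g`. Since `F' = -1/f`, one finds `ψ' = F^(1/2) (2 f' F - 3) < 0` on `[β, ∞)`, so `g'` is
positive and decreasing. The linear piece is the tangent line of `g` at `t₀`, so `H` is
differentiable on `(0, ∞)` with `H'(t) = ψ(g(max t t₀))`, positive and decreasing: `H` is concave
and nondecreasing. Finally `H(0) = β - 2 f(β) F(β)`.
-/

theorem integral_Ioi_pos {g : ℝ → ℝ} {s : ℝ} (hg : ∀ τ > s, 0 < g τ)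
    (hint : IntegrableOn g (Ioi s)) : 0 < ∫ τ in Ioi s, g τ := by
  have hsupp : Function.support g ∩ Ioi s = Ioi s :=
    inter_eq_right.2 fun τ hτ => (hg τ hτ).ne'
  rw [setIntegral_pos_iff_support_of_nonneg_ae
    ((ae_restrict_iff' measurableSet_Ioi).2 (ae_of_all _ fun τ hτ => (hg τ hτ).le)) hint, hsupp,
    Real.volume_Ioi]
  exact ENNReal.zero_lt_top

theorem hasDerivAt_of_eqOn_integral_Ioi {g F : ℝ → ℝ} {a s : ℝ} (hg : ContinuousOn g (Ioi a))
    (hint : ∀ x > a, IntegrableOn g (Ioi x))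
    (hF : EqOn F (fun x => ∫ τ in Ioi x, g τ) (Ioi a))
    (hs : a < s) : HasDerivAt F (-g s) s := by
  obtain ⟨b, hab, hbs⟩ := exists_between hs
  have hsplit : ∀ x ∈ Ioi b, F x = F b - ∫ τ in b..x, g τ := by
    intro x hx
    have hbx : b < x := hx
    rw [hF (hab.trans hbx), hF hab]
    dsimp only
    rw [intervalIntegral.integral_of_le hbx.le, ← Ioc_union_Ioi_eq_Ioi hbx.le,
      setIntegral_union Ioc_disjoint_Ioi_same measurableSet_Ioi
        ((hint b hab).mono_set Ioc_subset_Ioi_self) (hint x (hab.trans hbx))]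
    ring
  have hint_bs : IntervalIntegrable g volume b s :=
    (intervalIntegrable_iff_integrableOn_Ioc_of_le hbs.le).2
      ((hint b hab).mono_set Ioc_subset_Ioi_self)
  have hderiv := (intervalIntegral.integral_hasDerivAt_right hint_bs
    (hg.stronglyMeasurableAtFilter isOpen_Ioi s hs)
    (hg.continuousAt (Ioi_mem_nhds hs))).const_sub (F b)
  exact hderiv.congr_of_eventuallyEq (eventually_of_mem (Ioi_mem_nhds hbs) hsplit)

theorem antitoneOn_of_eqOn_integral_Ioi {g F : ℝ → ℝ} {a : ℝ} (hg : ∀ τ > a, 0 ≤ g τ)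
    (hint : ∀ x > a, IntegrableOn g (Ioi x))
    (hF : EqOn F (fun x => ∫ τ in Ioi x, g τ) (Ioi a)) : AntitoneOn F (Ioi a) := by
  intro x hx y hy hxy
  rw [hF hx, hF hy]
  exact setIntegral_mono_set (hint x hx)
    ((ae_restrict_iff' measurableSet_Ioi).2 (ae_of_all _ fun τ hτ => hg τ (hx.trans hτ)))
    (Ioi_subset_Ioi hxy).eventuallyLE

theorem hasDerivAt_of_hasDerivWithinAt_Iic_Ici {f : ℝ → ℝ} {f' x : ℝ}
    (hl : HasDerivWithinAt f f' (Iic x) x) (hr : HasDerivWithinAt f f' (Ici x) x) :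
    HasDerivAt f f' x := by
  simpa [Iic_union_Ici] using hl.union hr

theorem HasDerivWithinAt.of_local_left_inverse {𝕜 : Type*} [NontriviallyNormedField 𝕜]
    {f g : 𝕜 → 𝕜} {f' a : 𝕜} {s : Set 𝕜} (hg : ContinuousWithinAt g s a)
    (hf : HasDerivAt f f' (g a)) (hf' : f' ≠ 0) (ha : a ∈ s)
    (hfg : ∀ᶠ y in 𝓝[s] a, f (g y) = y) :
    HasDerivWithinAt g f'⁻¹ s a :=
  (hf.hasFDerivAt_equiv hf').hasFDerivWithinAt.of_local_left_inverse (t := univ)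
    (by simpa using hg.tendsto) ha hfg

section DerivOnIci

variable {H H' : ℝ → ℝ} {a : ℝ}

theorem concaveOn_Ici_of_hasDerivWithinAt
    (hH : ∀ t ≥ a, HasDerivWithinAt H (H' t) (Ici a) t) (hH' : AntitoneOn H' (Ioi a)) :
    ConcaveOn ℝ (Ici a) H := by
  have hderiv : ∀ t > a, HasDerivAt H (H' t) t := fun t ht =>
    (hH t ht.le).hasDerivAt (Ici_mem_nhds ht)
  refine AntitoneOn.concaveOn_of_deriv (convex_Ici a)
    (fun t ht => (hH t ht).continuousWithinAt) ?_ ?_ <;> rw [interior_Ici]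
  · exact fun t ht => (hderiv t ht).differentiableAt.differentiableWithinAt
  · intro x hx y hy hxy
    rw [(hderiv x hx).deriv, (hderiv y hy).deriv]
    exact hH' hx hy hxy

theorem monotoneOn_Ici_of_hasDerivWithinAt
    (hH : ∀ t ≥ a, HasDerivWithinAt H (H' t) (Ici a) t) (hH' : ∀ t > a, 0 ≤ H' t) :
    MonotoneOn H (Ici a) := by
  refine monotoneOn_of_hasDerivWithinAt_nonneg (f' := H') (convex_Ici a)
    (fun t ht => (hH t ht).continuousWithinAt) ?_ ?_ <;> rw [interior_Ici]
  · exact fun t ht => ((hH t ht.le).hasDerivAt (Ici_mem_nhds ht)).hasDerivWithinAt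
  · exact hH'

end DerivOnIci

theorem hasDerivWithinAt_extend_by_tangentLine {H g g' : ℝ → ℝ} {a t₀ t : ℝ} (ha : a < t₀)
    (hline : ∀ x ∈ Icc a t₀, H x = g' t₀ * (x - t₀) + g t₀) (hcurve : ∀ x > t₀, H x = g x)
    (hg : ∀ x ≥ t₀, HasDerivWithinAt g (g' x) (Ici t₀) x) (ht : a ≤ t) :
    HasDerivWithinAt H (g' (max t t₀)) (Ici a) t := by
  have hEq : ∀ x ≥ t₀, H x = g x := fun x hx => by
    rcases hx.eq_or_lt with rfl | hx
    · simpa using hline _ ⟨ha.le, le_rfl⟩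
    · exact hcurve x hx
  have hright : ∀ x ≥ t₀, HasDerivWithinAt H (g' x) (Ici t₀) x := fun x hx =>
    (hg x hx).congr (fun y hy => hEq y hy) (hEq x hx)
  have hleft : ∀ {s : Set ℝ} {x : ℝ}, x ∈ Icc a t₀ → Icc a t₀ ∈ 𝓝[s] x →
      HasDerivWithinAt H (g' t₀) s x := fun {s x} hx hmem => by
    have hL : HasDerivAt (fun y => g' t₀ * (y - t₀) + g t₀) (g' t₀) x := by
      simpa using (((hasDerivAt_id _).sub_const t₀).const_mul (g' t₀)).add_const (g t₀)
    exact hL.hasDerivWithinAt.congr_of_eventuallyEq (eventually_of_mem hmem hline) (hline _ hx)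
  rcases lt_trichotomy t t₀ with h | rfl | h
  · rw [max_eq_right h.le]
    exact hleft ⟨ht, h.le⟩
      (mem_nhdsWithin.2 ⟨Iio t₀, isOpen_Iio, h, fun x hx => ⟨hx.2, hx.1.le⟩⟩)
  · rw [max_self]
    refine (hasDerivAt_of_hasDerivWithinAt_Iic_Ici (hleft ⟨ha.le, le_rfl⟩ ?_)
      (hright t le_rfl)).hasDerivWithinAt
    exact mem_nhdsWithin.2 ⟨Ioi a, isOpen_Ioi, ha, fun x hx => ⟨hx.1.le, hx.2⟩⟩
  · rw [max_eq_left h.le]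
    exact ((hright t h.le).hasDerivAt (Ici_mem_nhds h)).hasDerivWithinAt

section InverseOfMonotone

variable {G g : ℝ → ℝ} {β t₀ : ℝ}

theorem MonotoneOn.continuousOn_of_invOn (hG : MonotoneOn G (Ici β))
    (hinv : InvOn g G (Ici β) (Ici t₀)) (hg : MapsTo g (Ici t₀) (Ici β))
    (hG' : MapsTo G (Ici β) (Ici t₀)) : ContinuousOn g (Ici t₀) := by
  have hmono : StrictMonoOn g (Ici t₀) :=
    (Function.monotoneOn_of_rightInvOn_of_mapsTo hG hinv.2 hg).strictMonoOn_of_injOn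
      (LeftInvOn.injOn hinv.2)
  have himage : g '' Ici t₀ = Ici β := (hinv.1.surjOn hG').image_eq_of_mapsTo hg
  intro t ht
  rcases (mem_Ici.1 ht).eq_or_lt with rfl | ht'
  · refine hmono.continuousWithinAt_right_of_image_mem_nhdsWithin self_mem_nhdsWithin ?_
    rw [himage]
    exact mem_of_superset self_mem_nhdsWithin (Ici_subset_Ici.2 (hg ht))
  · refine (hmono.continuousAt_of_image_mem_nhds (Ici_mem_nhds ht') ?_).continuousWithinAt
    rw [himage]
    exact Ici_mem_nhds ((hg self_mem_Ici).trans_lt (hmono self_mem_Ici ht ht'))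

theorem MonotoneOn.hasDerivWithinAt_of_invOn {φ : ℝ → ℝ} (hG : MonotoneOn G (Ici β))
    (hinv : InvOn g G (Ici β) (Ici t₀)) (hg : MapsTo g (Ici t₀) (Ici β))
    (hG' : MapsTo G (Ici β) (Ici t₀)) (hGd : ∀ s ≥ β, HasDerivAt G (φ s)⁻¹ s)
    (hφ : ∀ s ≥ β, φ s ≠ 0) {t : ℝ} (ht : t₀ ≤ t) :
    HasDerivWithinAt g (φ (g t)) (Ici t₀) t := by
  simpa using HasDerivWithinAt.of_local_left_inverse
    (hG.continuousOn_of_invOn hinv hg hG' t ht) (hGd _ (hg ht)) (inv_ne_zero (hφ _ (hg ht))) ht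
    (eventually_nhdsWithin_of_forall fun y hy => hinv.2 hy)

end InverseOfMonotone

theorem rpow_neg_half_rpow_neg_two {x : ℝ} (hx : 0 ≤ x) : (x ^ (-(1/2) : ℝ)) ^ (-(2:ℝ)) = x := by
  rw [← Real.rpow_mul hx]; norm_num

theorem rpow_neg_two_rpow_neg_half {x : ℝ} (hx : 0 ≤ x) : (x ^ (-(2:ℝ))) ^ (-(1/2) : ℝ) = x := by
  rw [← Real.rpow_mul hx]; norm_num

theorem rpow_neg_two_mem_Ioc {c t : ℝ} (hc : 0 < c) (ht : c ^ (-(1/2) : ℝ) ≤ t) :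
    t ^ (-(2:ℝ)) ∈ Ioc 0 c := by
  have hc' : 0 < c ^ (-(1/2) : ℝ) := Real.rpow_pos_of_pos hc _
  refine ⟨Real.rpow_pos_of_pos (hc'.trans_le ht) _, ?_⟩
  calc t ^ (-(2:ℝ)) ≤ (c ^ (-(1/2) : ℝ)) ^ (-(2:ℝ)) :=
        Real.rpow_le_rpow_of_nonpos hc' ht (by norm_num)
    _ = c := rpow_neg_half_rpow_neg_two hc.le

/-- The derivative of `t ↦ F⁻¹(t⁻²)` at the point where `F⁻¹(t⁻²) = s`, when `F' = -1/f`. -/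
noncomputable def tangentSlope (f F : ℝ → ℝ) (s : ℝ) : ℝ := 2 * F s ^ ((3:ℝ)/2) * f s

section TangentSlope

variable {f F : ℝ → ℝ}

theorem tangentSlope_pos {s : ℝ} (hf : 0 < f s) (hF : 0 < F s) : 0 < tangentSlope f F s := by
  unfold tangentSlope; positivity

theorem hasDerivAt_rpow_neg_half {s : ℝ} (hF : HasDerivAt F (-(1 / f s)) s) (hFs : 0 < F s)
    (hfs : f s ≠ 0) : HasDerivAt (fun x => F x ^ (-(1/2) : ℝ)) (tangentSlope f F s)⁻¹ s := by
  convert hF.rpow_const (p := -(1/2)) (Or.inl hFs.ne') using 1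
  rw [tangentSlope, show (-(1/2) : ℝ) - 1 = -((3:ℝ)/2) by norm_num, Real.rpow_neg hFs.le]
  field_simp

theorem hasDerivAt_tangentSlope {s : ℝ} (hF : HasDerivAt F (-(1 / f s)) s) (hFs : 0 < F s)
    (hfs : f s ≠ 0) (hfd : DifferentiableAt ℝ f s) :
    HasDerivAt (tangentSlope f F) (F s ^ ((1:ℝ)/2) * (2 * deriv f s * F s - 3)) s := by
  refine (((hF.rpow_const (p := (3:ℝ)/2) (Or.inl hFs.ne')).const_mul 2).mul
    hfd.hasDerivAt).congr_deriv ?_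
  have h32 : F s ^ ((3:ℝ)/2) = F s ^ ((1:ℝ)/2) * F s := by
    rw [← Real.rpow_add_one hFs.ne']; norm_num
  rw [show (3:ℝ)/2 - 1 = 1/2 by norm_num, h32]
  field_simp
  ring

theorem antitoneOn_tangentSlope {β : ℝ} (hF : ∀ s ≥ β, HasDerivAt F (-(1 / f s)) s)
    (hFpos : ∀ s ≥ β, 0 < F s) (hf : ∀ s ≥ β, f s ≠ 0) (hfd : ∀ s ≥ β, DifferentiableAt ℝ f s)
    (hfF : ∀ s ≥ β, deriv f s * F s ≤ 1) : AntitoneOn (tangentSlope f F) (Ici β) := by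
  have hd := fun s (hs : β ≤ s) =>
    hasDerivAt_tangentSlope (hF s hs) (hFpos s hs) (hf s hs) (hfd s hs)
  refine antitoneOn_of_hasDerivWithinAt_nonpos
    (f' := fun s => F s ^ ((1:ℝ)/2) * (2 * deriv f s * F s - 3)) (convex_Ici β)
    (fun s hs => (hd s hs).continuousAt.continuousWithinAt) ?_ ?_ <;> rw [interior_Ici]
  · exact fun s hs => (hd s (le_of_lt hs)).hasDerivWithinAt
  · intro s hs
    exact mul_nonpos_of_nonneg_of_nonpos (Real.rpow_pos_of_pos (hFpos s hs.le) _).le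
      (by linarith [hfF s hs.le])

end TangentSlope

section CurvedPiece

variable {F Finv : ℝ → ℝ} {β : ℝ}

theorem monotoneOn_rpow_neg_half (hFanti : AntitoneOn F (Ici β)) (hFpos : ∀ s ≥ β, 0 < F s) :
    MonotoneOn (fun s => F s ^ (-(1/2) : ℝ)) (Ici β) :=
  fun _ ha _ hb hab => Real.rpow_le_rpow_of_nonpos (hFpos _ hb) (hFanti ha hb hab) (by norm_num)

theorem invOn_Finv_rpow (hFpos : ∀ s ≥ β, 0 < F s) (hFinv_left : ∀ s ≥ β, Finv (F s) = s)
    (hFinv_right : ∀ u : ℝ, 0 < u → u ≤ F β → β ≤ Finv u ∧ F (Finv u) = u) :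
    InvOn (fun t => Finv (t ^ (-(2:ℝ)))) (fun s => F s ^ (-(1/2) : ℝ)) (Ici β)
      (Ici (F β ^ (-(1/2) : ℝ))) := by
  refine ⟨fun s hs => ?_, fun t ht => ?_⟩
  · simp only [rpow_neg_half_rpow_neg_two (hFpos s hs).le, hFinv_left s hs]
  · obtain ⟨hu, huβ⟩ := rpow_neg_two_mem_Ioc (hFpos β le_rfl) ht
    have ht₀ : 0 < t := (Real.rpow_pos_of_pos (hFpos β le_rfl) _).trans_le ht
    simp only [(hFinv_right _ hu huβ).2, rpow_neg_two_rpow_neg_half ht₀.le]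

theorem mapsTo_Finv_rpow (hFβ : 0 < F β)
    (hFinv_right : ∀ u : ℝ, 0 < u → u ≤ F β → β ≤ Finv u ∧ F (Finv u) = u) :
    MapsTo (fun t => Finv (t ^ (-(2:ℝ)))) (Ici (F β ^ (-(1/2) : ℝ))) (Ici β) := fun _ ht =>
  (hFinv_right _ (rpow_neg_two_mem_Ioc hFβ ht).1 (rpow_neg_two_mem_Ioc hFβ ht).2).1

theorem monotoneOn_Finv_rpow (hFpos : ∀ s ≥ β, 0 < F s) (hFanti : AntitoneOn F (Ici β))
    (hFinv_left : ∀ s ≥ β, Finv (F s) = s)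
    (hFinv_right : ∀ u : ℝ, 0 < u → u ≤ F β → β ≤ Finv u ∧ F (Finv u) = u) :
    MonotoneOn (fun t => Finv (t ^ (-(2:ℝ)))) (Ici (F β ^ (-(1/2) : ℝ))) :=
  Function.monotoneOn_of_rightInvOn_of_mapsTo (monotoneOn_rpow_neg_half hFanti hFpos)
    (invOn_Finv_rpow hFpos hFinv_left hFinv_right).2 (mapsTo_Finv_rpow (hFpos β le_rfl) hFinv_right)

theorem hasDerivWithinAt_Finv_rpow {f : ℝ → ℝ} (hFd : ∀ s ≥ β, HasDerivAt F (-(1 / f s)) s)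
    (hf : ∀ s ≥ β, 0 < f s) (hFpos : ∀ s ≥ β, 0 < F s) (hFanti : AntitoneOn F (Ici β))
    (hFinv_left : ∀ s ≥ β, Finv (F s) = s)
    (hFinv_right : ∀ u : ℝ, 0 < u → u ≤ F β → β ≤ Finv u ∧ F (Finv u) = u) {t : ℝ}
    (ht : F β ^ (-(1/2) : ℝ) ≤ t) :
    HasDerivWithinAt (fun t => Finv (t ^ (-(2:ℝ)))) (tangentSlope f F (Finv (t ^ (-(2:ℝ)))))
      (Ici (F β ^ (-(1/2) : ℝ))) t :=
  have hG := monotoneOn_rpow_neg_half hFanti hFpos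
  hG.hasDerivWithinAt_of_invOn (invOn_Finv_rpow hFpos hFinv_left hFinv_right)
    (mapsTo_Finv_rpow (hFpos β le_rfl) hFinv_right) (fun _ hs => hG self_mem_Ici hs hs)
    (fun s hs => hasDerivAt_rpow_neg_half (hFd s hs) (hFpos s hs) (hf s hs).ne')
    (fun s hs => (tangentSlope_pos (hf s hs) (hFpos s hs)).ne') ht

end CurvedPiece

theorem rpow_three_halves_mul_rpow_neg_half {c : ℝ} (hc : 0 < c) :
    c ^ ((3:ℝ)/2) * c ^ (-(1/2) : ℝ) = c := by
  rw [← Real.rpow_add hc]; norm_num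

theorem stmt8_general
    (f : ℝ → ℝ) (hf : ContDiffOn ℝ 1 f (Ici 0))
    (hfpos : ∀ s > (0:ℝ), 0 < f s)
    (hint : ∀ s > (0:ℝ), IntegrableOn (fun τ => 1 / f τ) (Ioi s))
    (F : ℝ → ℝ) (hF : ∀ s > (0:ℝ), F s = ∫ τ in Ioi s, 1 / f τ)
    (β : ℝ) (hβ : 0 < β) (hfF : ∀ s ≥ β, deriv f s * F s ≤ 1)
    (hβ2 : 0 ≤ β - 2 * f β * F β)
    (Finv : ℝ → ℝ)
    (hFinv_left : ∀ s > (0:ℝ), Finv (F s) = s)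
    (hFinv_right : ∀ u : ℝ, 0 < u → u ≤ F β → β ≤ Finv u ∧ F (Finv u) = u)
    (H : ℝ → ℝ)
    (hH₁ : ∀ t : ℝ, (F β) ^ (-(1/2) : ℝ) < t → H t = Finv (t ^ (-(2:ℝ))))
    (hH₂ : ∀ t : ℝ, 0 ≤ t → t ≤ (F β) ^ (-(1/2) : ℝ) →
      H t = 2 * (F β) ^ ((3:ℝ)/2) * f β * (t - (F β) ^ (-(1/2) : ℝ)) + β) :
    ConcaveOn ℝ (Ici 0) H ∧ MonotoneOn H (Ici 0) ∧ 0 ≤ H 0 := by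
  set t₀ : ℝ := F β ^ (-(1/2) : ℝ)
  have hpos : ∀ s ≥ β, 0 < s := fun s hs => hβ.trans_le hs
  have hfβ : ∀ s ≥ β, 0 < f s := fun s hs => hfpos s (hpos s hs)
  have hFd : ∀ s ≥ β, HasDerivAt F (-(1 / f s)) s := fun s hs =>
    hasDerivAt_of_eqOn_integral_Ioi (continuousOn_const.div (hf.continuousOn.mono
      Ioi_subset_Ici_self) fun x hx => (hfpos x hx).ne') hint hF (hpos s hs)
  have hFpos : ∀ s ≥ β, 0 < F s := fun s hs => hF s (hpos s hs) ▸
    integral_Ioi_pos (fun τ hτ => one_div_pos.2 (hfpos τ ((hpos s hs).trans hτ)))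
      (hint s (hpos s hs))
  have hFanti : AntitoneOn F (Ici β) := (antitoneOn_of_eqOn_integral_Ioi
    (fun τ hτ => (one_div_pos.2 (hfpos τ hτ)).le) hint hF).mono fun s hs => hpos s hs
  have hFinv_left' : ∀ s ≥ β, Finv (F s) = s := fun s hs => hFinv_left s (hpos s hs)
  have hgmaps := mapsTo_Finv_rpow (hFpos β le_rfl) hFinv_right
  have hgmono := monotoneOn_Finv_rpow hFpos hFanti hFinv_left' hFinv_right
  have hgβ : Finv (t₀ ^ (-(2:ℝ))) = β := by
    rw [rpow_neg_half_rpow_neg_two (hFpos β le_rfl).le, hFinv_left β hβ]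
  have ht₀ : 0 < t₀ := Real.rpow_pos_of_pos (hFpos β le_rfl) _
  have hHd := fun t (ht : 0 ≤ t) => hasDerivWithinAt_extend_by_tangentLine ht₀
    (fun x hx => by rw [hH₂ x hx.1 hx.2, hgβ]; rfl) hH₁
    (fun _ => hasDerivWithinAt_Finv_rpow hFd hfβ hFpos hFanti hFinv_left' hFinv_right) ht
  have hslope := antitoneOn_tangentSlope hFd hFpos (fun s hs => (hfβ s hs).ne')
    (fun s hs => (hf.contDiffAt (Ici_mem_nhds (hpos s hs))).differentiableAt one_ne_zero) hfF
  refine ⟨concaveOn_Ici_of_hasDerivWithinAt hHd fun x _ y _ hxy => ?_,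
    monotoneOn_Ici_of_hasDerivWithinAt hHd fun t _ => ?_, ?_⟩
  · exact hslope (hgmaps (le_max_right x t₀)) (hgmaps (le_max_right y t₀))
      (hgmono (le_max_right x t₀) (le_max_right y t₀) (max_le_max_right t₀ hxy))
  · have hgt := hgmaps (le_max_right t t₀)
    exact (tangentSlope_pos (hfβ _ hgt) (hFpos _ hgt)).le
  · rw [hH₂ 0 le_rfl ht₀.le]
    linear_combination hβ2 + 2 * f β * rpow_three_halves_mul_rpow_neg_half (hFpos β le_rfl)

/-- With `f, F, β` as before (`f'(s)F(s) ≤ 1` for `s ≥ β` and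
`β - 2 f(β) F(β) ≥ 0`), the function `H` equal to `F⁻¹(t⁻²)` for
`t > F(β)^(-1/2)` and to the tangent line
`2 F(β)^(3/2) f(β) (t - F(β)^(-1/2)) + β` for `0 ≤ t ≤ F(β)^(-1/2)` is
concave and nondecreasing on `[0,∞)`, with `H 0 ≥ 0`. -/
theorem stmt8
    (f : ℝ → ℝ) (hf : ContDiffOn ℝ 1 f (Ici 0))
    (hfpos : ∀ s > (0:ℝ), 0 < f s) (hf'pos : ∀ s > (0:ℝ), 0 < deriv f s)
    (hint : ∀ s > (0:ℝ), IntegrableOn (fun τ => 1 / f τ) (Ioi s))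
    (F : ℝ → ℝ) (hF : ∀ s > (0:ℝ), F s = ∫ τ in Ioi s, 1 / f τ)
    (β : ℝ) (hβ : 0 < β) (hfF : ∀ s ≥ β, deriv f s * F s ≤ 1)
    (hβ2 : 0 ≤ β - 2 * f β * F β)
    (Finv : ℝ → ℝ)
    (hFinv_left : ∀ s > (0:ℝ), Finv (F s) = s)
    (hFinv_right : ∀ u : ℝ, 0 < u → u ≤ F β → β ≤ Finv u ∧ F (Finv u) = u)
    (H : ℝ → ℝ)
    (hH₁ : ∀ t : ℝ, (F β) ^ (-(1/2) : ℝ) < t → H t = Finv (t ^ (-(2:ℝ))))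
    (hH₂ : ∀ t : ℝ, 0 ≤ t → t ≤ (F β) ^ (-(1/2) : ℝ) →
      H t = 2 * (F β) ^ ((3:ℝ)/2) * f β * (t - (F β) ^ (-(1/2) : ℝ)) + β) :
    ConcaveOn ℝ (Ici 0) H ∧ MonotoneOn H (Ici 0) ∧ 0 ≤ H 0 :=
  stmt8_general f hf hfpos hint F hF β hβ hfF hβ2 Finv hFinv_left hFinv_right H hH₁ hH₂
end
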